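/- arXiv:0907.0480 — 3 statements merged into one kernel-verified Lean document; each statement's English description precedes it below -/
import Mathlib

section
/- With the identification ι: ℝ³ ≅ su(2) as above, for every g ∈ SU(2) the map v ↦ ι⁻¹(g·ι(v)·g⁻¹) is a rotation of ℝ³, i.e., lies in SO(3); moreover the resulting homomorphism δ: SU(2) → SO(3) is surjective with kernel {I, −I}. -/
/-!
Write `g ∈ SU(2)` as `[[a, b], [-b̄, ā]]` with `a = x + iy`, `b = z + iw`, `x² + y² + z² + w² = 1`.
A direct computation shows that conjugation by `g` acts on `ι(ℝ³)` through the matrix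
`rotMatrix x y z w`, whose entries are quadratic forms in `(x, y, z, w)`; it is orthogonal with
determinant `(x² + y² + z² + w²)³ = 1`. Since `ι` is injective, it is the only matrix realising the
conjugation, which makes `g ↦ rotMatrix x y z w` multiplicative. Its diagonal forces `y = z = w = 0`
when it is the identity, so the kernel is `{±1}`. For surjectivity, every rotation is a product
`R_z(α) R_x(β) R_z(γ)` (Euler angles), and the half-angle elements `diag(e^{iθ/2}, e^{-iθ/2})` and
`[[cos(θ/2), i sin(θ/2)], [i sin(θ/2), cos(θ/2)]]` map to `R_z(θ)` and `R_x(θ)`.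
-/

open Matrix

noncomputable def iota (v : Fin 3 → ℝ) : Matrix (Fin 2) (Fin 2) ℂ :=
  (v 0) • ((1 / 2 : ℂ) • !![0, Complex.I; Complex.I, 0]) +
  (v 1) • ((1 / 2 : ℂ) • !![0, -1; 1, 0]) +
  (v 2) • ((1 / 2 : ℂ) • !![Complex.I, 0; 0, -Complex.I])

local notation "SU₂" => Matrix.specialUnitaryGroup (Fin 2) ℂ

def su2Matrix (x y z w : ℝ) : Matrix (Fin 2) (Fin 2) ℂ :=
  !![⟨x, y⟩, ⟨z, w⟩; ⟨-z, w⟩, ⟨x, -y⟩]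

def rotMatrix (x y z w : ℝ) : Matrix (Fin 3) (Fin 3) ℝ :=
  !![x^2 - y^2 - z^2 + w^2, -2*x*y - 2*z*w, -2*x*z + 2*y*w;
     2*x*y - 2*z*w, x^2 - y^2 + z^2 - w^2, -2*x*w - 2*y*z;
     2*x*z + 2*y*w, 2*x*w - 2*y*z, x^2 + y^2 - z^2 - w^2]

lemma iota_eq (v : Fin 3 → ℝ) :
    iota v = !![⟨0, v 2 / 2⟩, ⟨-v 1 / 2, v 0 / 2⟩; ⟨v 1 / 2, v 0 / 2⟩, ⟨0, -v 2 / 2⟩] := by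
  ext i j
  fin_cases i <;> fin_cases j <;> simp [iota, Complex.ext_iff, div_eq_inv_mul, mul_comm]

lemma iota_injective : Function.Injective iota := by
  intro u v h
  rw [iota_eq, iota_eq] at h
  have h00 := congrFun₂ h 0 0
  have h10 := congrFun₂ h 1 0
  simp only [of_apply, cons_val', cons_val_zero, empty_val', cons_val_fin_one, cons_val_one,
    Complex.ext_iff] at h00 h10
  funext i
  fin_cases i <;> simp <;> linarith [h00.2, h10.1, h10.2]

lemma star_su2Matrix (x y z w : ℝ) :
    star (su2Matrix x y z w) = su2Matrix x (-y) (-z) (-w) := by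
  ext i j
  fin_cases i <;> fin_cases j <;> simp [su2Matrix, star_apply, Complex.ext_iff]

lemma iota_rotMatrix_mulVec (x y z w : ℝ) (v : Fin 3 → ℝ) :
    iota (rotMatrix x y z w *ᵥ v) = su2Matrix x y z w * iota v * star (su2Matrix x y z w) := by
  rw [star_su2Matrix, iota_eq, iota_eq, su2Matrix, su2Matrix, mul_fin_two, mul_fin_two]
  ext i j
  fin_cases i <;> fin_cases j <;>
    simp [rotMatrix, mulVec, dotProduct, Fin.sum_univ_three, Complex.ext_iff] <;>
    constructor <;> ring

lemma su2Matrix_mem_specialUnitaryGroup {x y z w : ℝ} (h : x^2 + y^2 + z^2 + w^2 = 1) :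
    su2Matrix x y z w ∈ SU₂ := by
  refine ⟨mem_unitaryGroup_iff.mpr ?_, ?_⟩
  · rw [star_su2Matrix, su2Matrix, su2Matrix, mul_fin_two, one_fin_two]
    ext i j
    fin_cases i <;> fin_cases j <;> simp [Complex.ext_iff] <;> constructor <;>
      first | linear_combination h | ring1
  · simp [su2Matrix, det_fin_two, Complex.ext_iff]
    constructor <;> first | linear_combination h | ring1

lemma rotMatrix_mem_specialOrthogonalGroup {x y z w : ℝ} (h : x^2 + y^2 + z^2 + w^2 = 1) :
    rotMatrix x y z w ∈ specialOrthogonalGroup (Fin 3) ℝ := by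
  refine mem_specialOrthogonalGroup_iff.mpr ⟨(mem_orthogonalGroup_iff _ _).mpr ?_, ?_⟩
  · ext i j
    fin_cases i <;> fin_cases j <;> simp [rotMatrix, mul_apply, Fin.sum_univ_three] <;>
      first | ring1 | linear_combination (x^2 + y^2 + z^2 + w^2 + 1) * h
  · simp [rotMatrix, det_fin_three]
    linear_combination ((x^2 + y^2 + z^2 + w^2)^2 + x^2 + y^2 + z^2 + w^2 + 1) * h

lemma coe_inv_eq_star (g : SU₂) : g.1⁻¹ = star g.1 :=
  inv_eq_right_inv (mem_unitaryGroup_iff.mp g.2.1)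

lemma coe_eq_su2Matrix (g : SU₂) :
    g.1 = su2Matrix (g.1 0 0).re (g.1 0 0).im (g.1 0 1).re (g.1 0 1).im := by
  have hadj : adjugate g.1 = star g.1 := by
    rw [← coe_inv_eq_star, inv_def, (mem_specialUnitaryGroup_iff.mp g.2).2]
    simp
  have h11 : g.1 1 1 = star (g.1 0 0) := by
    simpa [adjugate_fin_two, star_apply] using congrFun₂ hadj 0 0
  have h10 : g.1 1 0 = -star (g.1 0 1) := by
    have h01 := congrFun₂ hadj 0 1
    simp only [adjugate_fin_two, star_apply, of_apply, cons_val', cons_val_zero, cons_val_one,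
      empty_val', cons_val_fin_one] at h01
    rw [← star_star (g.1 1 0), ← h01, star_neg]
  ext i j
  fin_cases i <;> fin_cases j <;> simp [su2Matrix, Complex.ext_iff, h11, h10]

lemma re_sq_add_im_sq_add_re_sq_add_im_sq_eq_one (g : SU₂) :
    (g.1 0 0).re^2 + (g.1 0 0).im^2 + (g.1 0 1).re^2 + (g.1 0 1).im^2 = 1 := by
  have hdet := (mem_specialUnitaryGroup_iff.mp g.2).2
  rw [coe_eq_su2Matrix g] at hdet
  simp only [su2Matrix, det_fin_two, of_apply, cons_val', cons_val_zero, cons_val_one,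
    empty_val', cons_val_fin_one, Complex.ext_iff] at hdet
  simp only [Complex.sub_re, Complex.mul_re, Complex.one_re] at hdet
  linear_combination hdet.1

noncomputable def toSO3 (g : SU₂) : Matrix (Fin 3) (Fin 3) ℝ :=
  rotMatrix (g.1 0 0).re (g.1 0 0).im (g.1 0 1).re (g.1 0 1).im

lemma toSO3_su2Matrix {x y z w : ℝ} (h : x^2 + y^2 + z^2 + w^2 = 1) :
    toSO3 ⟨su2Matrix x y z w, su2Matrix_mem_specialUnitaryGroup h⟩ = rotMatrix x y z w :=
  rfl

lemma toSO3_mem_specialOrthogonalGroup (g : SU₂) : toSO3 g ∈ specialOrthogonalGroup (Fin 3) ℝ :=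
  rotMatrix_mem_specialOrthogonalGroup (re_sq_add_im_sq_add_re_sq_add_im_sq_eq_one g)

lemma iota_toSO3_mulVec (g : SU₂) (v : Fin 3 → ℝ) :
    iota (toSO3 g *ᵥ v) = g.1 * iota v * g.1⁻¹ := by
  rw [coe_inv_eq_star, toSO3, iota_rotMatrix_mulVec, ← coe_eq_su2Matrix]

lemma eq_toSO3_of_iota_mulVec {g : SU₂} {M : Matrix (Fin 3) (Fin 3) ℝ}
    (h : ∀ v, iota (M *ᵥ v) = g.1 * iota v * g.1⁻¹) : M = toSO3 g :=
  ext_iff_mulVec.mpr fun v => iota_injective (by rw [h, iota_toSO3_mulVec])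

lemma toSO3_mul (g h : SU₂) : toSO3 (g * h) = toSO3 g * toSO3 h := by
  refine (eq_toSO3_of_iota_mulVec fun v => ?_).symm
  rw [← mulVec_mulVec, iota_toSO3_mulVec, iota_toSO3_mulVec, Submonoid.coe_mul, Matrix.mul_inv_rev]
  noncomm_ring

lemma rotMatrix_eq_one_iff {x y z w : ℝ} (h : x^2 + y^2 + z^2 + w^2 = 1) :
    rotMatrix x y z w = 1 ↔ y = 0 ∧ z = 0 ∧ w = 0 := by
  constructor
  · intro hR
    have e₀ := congrFun₂ hR 0 0
    have e₁ := congrFun₂ hR 1 1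
    have e₂ := congrFun₂ hR 2 2
    simp only [rotMatrix, of_apply, cons_val', cons_val_zero, cons_val_one, cons_val,
      cons_val_fin_one, one_apply_eq] at e₀ e₁ e₂
    refine ⟨?_, ?_, ?_⟩ <;> nlinarith [sq_nonneg y, sq_nonneg z, sq_nonneg w]
  · rintro ⟨rfl, rfl, rfl⟩
    have hx : x^2 = 1 := by linear_combination h
    ext i j
    fin_cases i <;> fin_cases j <;> simp [rotMatrix, hx]

lemma su2Matrix_eq_one_or_neg_one_iff {x y z w : ℝ} (h : x^2 + y^2 + z^2 + w^2 = 1) :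
    su2Matrix x y z w = 1 ∨ su2Matrix x y z w = -1 ↔ y = 0 ∧ z = 0 ∧ w = 0 := by
  simp only [su2Matrix, ← Matrix.ext_iff, Fin.forall_fin_two, of_apply, cons_val', cons_val_zero,
    cons_val_one, cons_val_fin_one, Complex.ext_iff, one_apply_eq, one_apply_ne, ne_eq, zero_ne_one,
    one_ne_zero, not_false_eq_true, Matrix.neg_apply, Complex.one_re, Complex.one_im,
    Complex.zero_re, Complex.zero_im, Complex.neg_re, Complex.neg_im, neg_zero, neg_eq_zero]
  constructor
  · rintro (⟨⟨⟨-, hy⟩, hz, hw⟩, -⟩ | ⟨⟨⟨-, hy⟩, hz, hw⟩, -⟩) <;> exact ⟨hy, hz, hw⟩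
  · rintro ⟨rfl, rfl, rfl⟩
    rcases sq_eq_one_iff.mp (by linear_combination h : x^2 = 1) with rfl | rfl <;> simp

lemma toSO3_eq_one_iff (g : SU₂) : toSO3 g = 1 ↔ g.1 = 1 ∨ g.1 = -1 := by
  have hg := re_sq_add_im_sq_add_re_sq_add_im_sq_eq_one g
  have key := (rotMatrix_eq_one_iff hg).trans (su2Matrix_eq_one_or_neg_one_iff hg).symm
  rwa [← coe_eq_su2Matrix] at key

open Real

noncomputable def rotZ (θ : ℝ) : Matrix (Fin 3) (Fin 3) ℝ :=
  !![cos θ, -sin θ, 0; sin θ, cos θ, 0; 0, 0, 1]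

noncomputable def rotX (θ : ℝ) : Matrix (Fin 3) (Fin 3) ℝ :=
  !![1, 0, 0; 0, cos θ, -sin θ; 0, sin θ, cos θ]

lemma exists_eq_sqrt_mul_cos_sin (a b : ℝ) :
    ∃ θ, a = √(a^2 + b^2) * cos θ ∧ b = √(a^2 + b^2) * sin θ := by
  refine ⟨Complex.arg ⟨a, b⟩, ?_, ?_⟩
  · simpa [Complex.norm_eq_sqrt_sq_add_sq] using (Complex.norm_mul_cos_arg ⟨a, b⟩).symm
  · simpa [Complex.norm_eq_sqrt_sq_add_sq] using (Complex.norm_mul_sin_arg ⟨a, b⟩).symm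

lemma exists_cos_sin_eq {a b : ℝ} (h : a^2 + b^2 = 1) : ∃ θ, cos θ = a ∧ sin θ = b := by
  obtain ⟨θ, ha, hb⟩ := exists_eq_sqrt_mul_cos_sin a b
  rw [h, sqrt_one, one_mul] at ha hb
  exact ⟨θ, ha.symm, hb.symm⟩

lemma rotZ_mem_specialOrthogonalGroup (θ : ℝ) : rotZ θ ∈ specialOrthogonalGroup (Fin 3) ℝ := by
  refine mem_specialOrthogonalGroup_iff.mpr ⟨(mem_orthogonalGroup_iff _ _).mpr ?_, ?_⟩
  · ext i j
    fin_cases i <;> fin_cases j <;> simp [rotZ, mul_apply, Fin.sum_univ_three] <;>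
      first | ring1 | linear_combination cos_sq_add_sin_sq θ
  · simp [rotZ, det_fin_three]
    linear_combination cos_sq_add_sin_sq θ

lemma rotX_mem_specialOrthogonalGroup (θ : ℝ) : rotX θ ∈ specialOrthogonalGroup (Fin 3) ℝ := by
  refine mem_specialOrthogonalGroup_iff.mpr ⟨(mem_orthogonalGroup_iff _ _).mpr ?_, ?_⟩
  · ext i j
    fin_cases i <;> fin_cases j <;> simp [rotX, mul_apply, Fin.sum_univ_three] <;>
      first | ring1 | linear_combination cos_sq_add_sin_sq θ
  · simp [rotX, det_fin_three]
    linear_combination cos_sq_add_sin_sq θ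

lemma exists_rotZ_mul_rotX_mulVec_eq {u : Fin 3 → ℝ} (hu : u 0 ^ 2 + u 1 ^ 2 + u 2 ^ 2 = 1) :
    ∃ α β, (rotZ α * rotX β) *ᵥ Pi.single 2 1 = u := by
  set r := √(u 0 ^ 2 + u 1 ^ 2)
  obtain ⟨α, hα₁, hα₀⟩ := exists_eq_sqrt_mul_cos_sin (-u 1) (u 0)
  obtain ⟨β, hβ₂, hβr⟩ : ∃ β, cos β = u 2 ∧ sin β = r := by
    refine exists_cos_sin_eq ?_
    rw [sq_sqrt (by positivity)]
    linear_combination hu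
  refine ⟨α, β, ?_⟩
  rw [neg_sq, add_comm] at hα₁ hα₀
  ext i
  fin_cases i <;> simp [rotZ, rotX, mulVec, dotProduct, Fin.sum_univ_three, hβ₂, hβr] <;> linarith

lemma exists_eq_rotZ_of_mulVec_single_two {B : Matrix (Fin 3) (Fin 3) ℝ}
    (hB : B ∈ specialOrthogonalGroup (Fin 3) ℝ) (hfix : B *ᵥ Pi.single 2 1 = Pi.single 2 1) :
    ∃ γ, B = rotZ γ := by
  obtain ⟨hBo, hdet⟩ := mem_specialOrthogonalGroup_iff.mp hB
  obtain ⟨h02, h12, h22⟩ : B 0 2 = 0 ∧ B 1 2 = 0 ∧ B 2 2 = 1 := by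
    simpa [mulVec_single_one, funext_iff, Fin.forall_fin_succ] using hfix
  have hrow := congrFun₂ ((mem_orthogonalGroup_iff _ _).mp hBo) 2 2
  have hcols := (mem_orthogonalGroup_iff' _ _).mp hBo
  have h00 := congrFun₂ hcols 0 0
  have h01 := congrFun₂ hcols 0 1
  simp only [mul_apply, transpose_apply, Fin.sum_univ_three, h22, mul_one, one_apply_eq,
    add_eq_right, ne_eq, zero_ne_one, not_false_eq_true, one_apply_ne] at hrow h00 h01
  have h20 : B 2 0 = 0 := by nlinarith
  have h21 : B 2 1 = 0 := by nlinarith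
  simp only [h20, h21, mul_zero, add_zero] at h00 h01
  rw [det_fin_three, h02, h12, h22, h20, h21] at hdet
  have h11 : B 1 1 = B 0 0 := by
    linear_combination (-B 1 1) * h00 + B 0 0 * hdet + B 1 0 * h01
  have h10 : B 0 1 = -B 1 0 := by
    linear_combination (-B 0 1) * h00 - B 1 0 * hdet + B 0 0 * h01
  obtain ⟨γ, hc, hs⟩ := exists_cos_sin_eq (a := B 0 0) (b := B 1 0) (by linear_combination h00)
  refine ⟨γ, ?_⟩
  ext i j
  fin_cases i <;> fin_cases j <;> simp [rotZ, hc, hs, h02, h12, h22, h20, h21, h11, h10]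

lemma exists_eq_rotZ_mul_rotX_mul_rotZ {M : Matrix (Fin 3) (Fin 3) ℝ}
    (hM : M ∈ specialOrthogonalGroup (Fin 3) ℝ) : ∃ α β γ, M = rotZ α * rotX β * rotZ γ := by
  set u := M *ᵥ Pi.single 2 1 with hu
  have hunit : u 0 ^ 2 + u 1 ^ 2 + u 2 ^ 2 = 1 := by
    have hcol := congrFun₂ ((mem_orthogonalGroup_iff' _ _).mp hM.1) 2 2
    simp only [mul_apply, transpose_apply, Fin.sum_univ_three, one_apply_eq] at hcol
    simp only [hu, mulVec_single_one, col_apply]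
    linear_combination hcol
  obtain ⟨α, β, hαβ⟩ := exists_rotZ_mul_rotX_mulVec_eq hunit
  let A : specialOrthogonalGroup (Fin 3) ℝ :=
    ⟨rotZ α * rotX β,
      mul_mem (rotZ_mem_specialOrthogonalGroup α) (rotX_mem_specialOrthogonalGroup β)⟩
  let B := A⁻¹ * ⟨M, hM⟩
  have hfix : B.1 *ᵥ Pi.single 2 1 = Pi.single 2 1 := by
    calc B.1 *ᵥ Pi.single 2 1 = (A⁻¹ * A).1 *ᵥ Pi.single 2 1 := by
          rw [Submonoid.coe_mul, Submonoid.coe_mul, ← mulVec_mulVec, ← mulVec_mulVec]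
          exact congrArg _ hαβ.symm
      _ = Pi.single 2 1 := by rw [inv_mul_cancel, OneMemClass.coe_one, one_mulVec]
  obtain ⟨γ, hγ⟩ := exists_eq_rotZ_of_mulVec_single_two B.2 hfix
  refine ⟨α, β, γ, ?_⟩
  rw [← hγ]
  exact congrArg Subtype.val (mul_inv_cancel_left A ⟨M, hM⟩).symm

lemma rotMatrix_cos_sin_zero_zero (φ : ℝ) : rotMatrix (cos φ) (sin φ) 0 0 = rotZ (2 * φ) := by
  ext i j
  fin_cases i <;> fin_cases j <;> simp [rotMatrix, rotZ, cos_two_mul', sin_two_mul] <;> ring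

lemma rotMatrix_cos_zero_zero_sin (φ : ℝ) : rotMatrix (cos φ) 0 0 (sin φ) = rotX (2 * φ) := by
  ext i j
  fin_cases i <;> fin_cases j <;> simp [rotMatrix, rotX, cos_two_mul', sin_two_mul] <;> ring

lemma rotZ_mem_range_toSO3 (θ : ℝ) : rotZ θ ∈ Set.range toSO3 := by
  have h : cos (θ / 2) ^ 2 + sin (θ / 2) ^ 2 + 0 ^ 2 + 0 ^ 2 = 1 := by simp
  refine ⟨_, (toSO3_su2Matrix h).trans ?_⟩
  rw [rotMatrix_cos_sin_zero_zero, mul_div_cancel₀ θ two_ne_zero]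

lemma rotX_mem_range_toSO3 (θ : ℝ) : rotX θ ∈ Set.range toSO3 := by
  have h : cos (θ / 2) ^ 2 + 0 ^ 2 + 0 ^ 2 + sin (θ / 2) ^ 2 = 1 := by simp
  refine ⟨_, (toSO3_su2Matrix h).trans ?_⟩
  rw [rotMatrix_cos_zero_zero_sin, mul_div_cancel₀ θ two_ne_zero]

lemma mem_range_toSO3 {M : Matrix (Fin 3) (Fin 3) ℝ} (hM : M ∈ specialOrthogonalGroup (Fin 3) ℝ) :
    M ∈ Set.range toSO3 := by
  obtain ⟨α, β, γ, rfl⟩ := exists_eq_rotZ_mul_rotX_mul_rotZ hM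
  obtain ⟨g₁, hg₁⟩ := rotZ_mem_range_toSO3 α
  obtain ⟨g₂, hg₂⟩ := rotX_mem_range_toSO3 β
  obtain ⟨g₃, hg₃⟩ := rotZ_mem_range_toSO3 γ
  exact ⟨g₁ * g₂ * g₃, by rw [toSO3_mul, toSO3_mul, hg₁, hg₂, hg₃]⟩

/-- For every g ∈ SU(2), the map v ↦ ι⁻¹(g·ι(v)·g⁻¹) is a rotation, i.e. it is given by a
unique matrix δ(g) ∈ SO(3); the resulting map δ : SU(2) → SO(3) is a group homomorphism,
is surjective, and has kernel {I, −I}. -/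
theorem su2_double_covers_so3 :
    ∃ δ : Matrix.specialUnitaryGroup (Fin 2) ℂ → Matrix (Fin 3) (Fin 3) ℝ,
      (∀ g : Matrix.specialUnitaryGroup (Fin 2) ℂ,
          δ g ∈ Matrix.orthogonalGroup (Fin 3) ℝ ∧ (δ g).det = 1 ∧
          (∀ v : Fin 3 → ℝ, iota ((δ g).mulVec v) = (g : Matrix (Fin 2) (Fin 2) ℂ) * iota v * (g : Matrix (Fin 2) (Fin 2) ℂ)⁻¹) ∧
          (∀ M : Matrix (Fin 3) (Fin 3) ℝ,
            (∀ v : Fin 3 → ℝ, iota (M.mulVec v) = (g : Matrix (Fin 2) (Fin 2) ℂ) * iota v * (g : Matrix (Fin 2) (Fin 2) ℂ)⁻¹) →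
            M = δ g)) ∧
      (∀ g h : Matrix.specialUnitaryGroup (Fin 2) ℂ, δ (g * h) = δ g * δ h) ∧
      (∀ M : Matrix (Fin 3) (Fin 3) ℝ, M ∈ Matrix.orthogonalGroup (Fin 3) ℝ → M.det = 1 →
        ∃ g : Matrix.specialUnitaryGroup (Fin 2) ℂ, δ g = M) ∧
      (∀ g : Matrix.specialUnitaryGroup (Fin 2) ℂ,
        δ g = 1 ↔ ((g : Matrix (Fin 2) (Fin 2) ℂ) = 1 ∨ (g : Matrix (Fin 2) (Fin 2) ℂ) = -1)) := by
  refine ⟨toSO3, fun g => ?_, toSO3_mul, fun M hMo hMd => ?_, toSO3_eq_one_iff⟩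
  · exact ⟨(toSO3_mem_specialOrthogonalGroup g).1, (toSO3_mem_specialOrthogonalGroup g).2,
      iota_toSO3_mulVec g, fun M => eq_toSO3_of_iota_mulVec⟩
  · exact mem_range_toSO3 (mem_specialOrthogonalGroup_iff.mpr ⟨hMo, hMd⟩)
end

section
/- Let C(t) = (t−i)/(t+i), ζ = e^{2πi/3}, and define γ: ℝ → ℝ (for t with C(t)·ζ ≠ 1) by γ(t) = C⁻¹(ζ·C(t)), i.e., the conjugation by the Cayley transform of rotation by 2π/3. With Q(w) = w³ + w⁻³ and p(t) = (d/dt)(Q(C(t))/C(t)), one has p(γ(t))·γ'(t) = ζ⁻¹·p(t) = e^{−2πi/3} p(t) for all t in the domain of γ. -/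
/-!
Since `ζ³ = 1`, the Laurent polynomial `Q(w) = w³ + w⁻³` is invariant under `w ↦ ζ w`, so
`g(s) = Q(C(s))/C(s)` satisfies `g(γ(s)) = ζ⁻¹ g(s)` on the open set where `C ∘ γ = ζ C`.
Differentiating this identity at `t` with the chain rule gives `p(γ(t)) γ'(t) = ζ⁻¹ p(t)`.
-/

open Topology

noncomputable def cayley (x : ℝ) : ℂ := ((x : ℂ) - Complex.I) / ((x : ℂ) + Complex.I)

noncomputable def Qfun (w : ℂ) : ℂ := w ^ (3 : ℤ) + w ^ (-3 : ℤ)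

noncomputable def pfun (t : ℝ) : ℂ := deriv (fun s : ℝ => Qfun (cayley s) / cayley s) t

lemma ofReal_add_I_ne_zero (x : ℝ) : (x : ℂ) + Complex.I ≠ 0 := fun h => by
  simpa using congrArg Complex.im h

lemma ofReal_sub_I_ne_zero (x : ℝ) : (x : ℂ) - Complex.I ≠ 0 := fun h => by
  simpa using congrArg Complex.im h

lemma cayley_ne_zero (x : ℝ) : cayley x ≠ 0 :=
  div_ne_zero (ofReal_sub_I_ne_zero x) (ofReal_add_I_ne_zero x)

lemma differentiable_cayley : Differentiable ℝ cayley := fun x =>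
  (Complex.ofRealCLM.differentiableAt.sub_const _).div
    (Complex.ofRealCLM.differentiableAt.add_const _) (ofReal_add_I_ne_zero x)

lemma differentiable_Qfun_cayley_div_cayley :
    Differentiable ℝ fun s : ℝ => Qfun (cayley s) / cayley s := fun x => by
  have hzpow (n : ℤ) : DifferentiableAt ℂ (fun w : ℂ => w ^ n) (cayley x) :=
    differentiableAt_zpow.mpr (Or.inl (cayley_ne_zero x))
  have hQ : DifferentiableAt ℂ Qfun (cayley x) := (hzpow 3).add (hzpow (-3))
  exact ((hQ.restrictScalars ℝ).comp x (differentiable_cayley x)).div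
    (differentiable_cayley x) (cayley_ne_zero x)

lemma Qfun_mul_of_pow_three_eq_one {ζ : ℂ} (hζ : ζ ^ 3 = 1) (w : ℂ) :
    Qfun (ζ * w) = Qfun w := by
  have hζ3 : ζ ^ (3 : ℤ) = 1 := by exact_mod_cast hζ
  simp only [Qfun, mul_zpow, hζ3, zpow_neg, one_mul]

lemma Qfun_div_mul_of_pow_three_eq_one {ζ : ℂ} (hζ : ζ ^ 3 = 1) (w : ℂ) :
    Qfun (ζ * w) / (ζ * w) = ζ⁻¹ * (Qfun w / w) := by
  rw [Qfun_mul_of_pow_three_eq_one hζ, div_mul_eq_div_div_swap, div_eq_inv_mul (Qfun w / w)]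

lemma exp_two_pi_I_div_three_pow_three : Complex.exp (2 * Real.pi * Complex.I / 3) ^ 3 = 1 := by
  simpa using (Complex.isPrimitiveRoot_exp 3 (by norm_num)).pow_eq_one

lemma deriv_comp_mul_deriv_eq_const_mul {f : ℝ → ℂ} {γ : ℝ → ℝ} {c : ℂ} {t : ℝ}
    (hf : DifferentiableAt ℝ f (γ t)) (hγ : DifferentiableAt ℝ γ t)
    (h : f ∘ γ =ᶠ[𝓝 t] fun s => c * f s) :
    deriv f (γ t) * ((deriv γ t : ℝ) : ℂ) = c * deriv f t := by
  calc deriv f (γ t) * ((deriv γ t : ℝ) : ℂ) = deriv γ t • deriv f (γ t) := by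
        rw [Complex.real_smul, mul_comm]
    _ = deriv (f ∘ γ) t := (deriv.scomp t hf hγ).symm
    _ = c * deriv f t := by rw [h.deriv_eq, deriv_const_mul_field]

/-- Equivariance of the potential coefficient p under the Cayley-conjugated rotation by
2π/3: if ζ = e^{2πi/3} and γ satisfies C(γ(t)) = ζ·C(t), then
p(γ(t))·γ'(t) = ζ⁻¹·p(t) = e^{−2πi/3}·p(t). -/
theorem amsler_potential_equivariance (S : Set ℝ) (hS : IsOpen S)
    (γ : ℝ → ℝ) (hγdiff : ∀ t ∈ S, DifferentiableAt ℝ γ t)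
    (hγC : ∀ t ∈ S, cayley (γ t)
      = Complex.exp (2 * Real.pi * Complex.I / 3) * cayley t) :
    ∀ t ∈ S, pfun (γ t) * ((deriv γ t : ℝ) : ℂ)
      = (Complex.exp (2 * Real.pi * Complex.I / 3))⁻¹ * pfun t ∧
      (Complex.exp (2 * Real.pi * Complex.I / 3))⁻¹
        = Complex.exp (-(2 * Real.pi * Complex.I) / 3) := by
  intro t ht
  refine ⟨?_, by rw [← Complex.exp_neg, neg_div]⟩
  have hg_comp : (fun s : ℝ => Qfun (cayley s) / cayley s) ∘ γ =ᶠ[𝓝 t]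
      fun s => (Complex.exp (2 * Real.pi * Complex.I / 3))⁻¹ * (Qfun (cayley s) / cayley s) := by
    filter_upwards [hS.mem_nhds ht] with s hs
    rw [Function.comp_apply, hγC s hs,
      Qfun_div_mul_of_pow_three_eq_one exp_two_pi_I_div_three_pow_three]
  exact deriv_comp_mul_deriv_eq_const_mul (differentiable_Qfun_cayley_div_cayley _)
    (hγdiff t ht) hg_comp
end

section
/- Suppose U: D → SL(2,ℂ) satisfies U⁻¹dU = A dx + B dy with A = A₀ + λA₁ and B = λ⁻¹B₁ (A₀, A₁, B₁ independent of λ), and suppose U = P·V where V: D → SL(2,ℂ) admits an expansion V = V₀ + λ⁻¹V₋₁ + λ⁻²V₋₂ + … in non-positive powers of λ and P admits an expansion in non-negative powers of λ with zero constant-term variation, such that P⁻¹dP = V(Adx + Bdy)V⁻¹ − dV·V⁻¹ contains only strictly positive powers of λ. Then P is independent of y. -/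
/-!
Fix a point `p` and read both sides of `P⁻¹ ∂P/∂y = V (λ⁻¹ B₁) V⁻¹ - ∂V/∂y V⁻¹` as functions
of `λ ≠ 0`. The coefficients of `V` are, by Vandermonde inversion, fixed linear combinations of
values of `V`, hence differentiable, so `∂V/∂y` expands in non-positive powers of `λ` as well;
as such expansions form an algebra, so does the right-hand side. The left-hand side is a
polynomial in `λ` without constant term. After multiplying by a large power of `λ` both sides
are polynomials agreeing at infinitely many points, and comparing coefficients kills the left
side. Hence `P⁻¹ ∂P/∂y = 0`.
-/

open Matrix

attribute [local instance] Matrix.normedAddCommGroup Matrix.normedSpace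

noncomputable def pdy {E : Type*} [NormedAddCommGroup E] [NormedSpace ℝ E]
    (f : ℝ × ℝ → E) (p : ℝ × ℝ) : E := fderiv ℝ f p (0, 1)

open Filter Topology

section InvPolynomial

variable (K A : Type*) [Field K] [Ring A] [Algebra K A]

def invPolynomialFunctions : Subalgebra K (K → A) where
  carrier := {F | ∃ (ι : Type) (_ : Fintype ι) (e : ι → ℕ) (g : ι → A),
    ∀ t, F t = ∑ i, t⁻¹ ^ e i • g i}
  mul_mem' := by
    rintro F G ⟨ι, _, e, g, hF⟩ ⟨κ, _, e', g', hG⟩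
    refine ⟨ι × κ, inferInstance, fun x => e x.1 + e' x.2, fun x => g x.1 * g' x.2, fun t => ?_⟩
    simp only [Pi.mul_apply, hF, hG, Finset.sum_mul_sum, Fintype.sum_prod_type,
      smul_mul_smul_comm, pow_add]
  add_mem' := by
    rintro F G ⟨ι, _, e, g, hF⟩ ⟨κ, _, e', g', hG⟩
    exact ⟨ι ⊕ κ, inferInstance, Sum.elim e e', Sum.elim g g', fun t => by
      simp [hF, hG, Fintype.sum_sum_type]⟩
  algebraMap_mem' r := ⟨Unit, inferInstance, fun _ => 0, fun _ => algebraMap K A r, fun t => by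
    simp⟩

variable {K A}

theorem inv_pow_smul_mem_invPolynomialFunctions (m : ℕ) (c : A) :
    (fun t : K => t⁻¹ ^ m • c) ∈ invPolynomialFunctions K A :=
  ⟨Unit, inferInstance, fun _ => m, fun _ => c, fun t => by simp⟩

theorem sum_inv_pow_smul_mem_invPolynomialFunctions (s : Finset ℕ) (c : ℕ → A) :
    (fun t : K => ∑ m ∈ s, t⁻¹ ^ m • c m) ∈ invPolynomialFunctions K A := by
  rw [← Finset.sum_fn]
  exact Subalgebra.sum_mem _ fun m _ => inv_pow_smul_mem_invPolynomialFunctions m (c m)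

end InvPolynomial

open Polynomial in
theorem eq_zero_of_sum_pow_succ_mul_eq_sum_inv_pow_mul {K ι : Type*} [Field K] [Infinite K]
    [Fintype ι] {N : ℕ} {f : ℕ → K} {e : ι → ℕ} {g : ι → K}
    (h : ∀ t : K, t ≠ 0 → ∑ n ∈ Finset.range N, t ^ (n + 1) * f n = ∑ i, t⁻¹ ^ e i * g i)
    {n : ℕ} (hn : n < N) : f n = 0 := by
  set M := Finset.univ.sup e
  have hp : (∑ n ∈ Finset.range N, C (f n) * X ^ (n + 1 + M)) =
      ∑ i, C (g i) * X ^ (M - e i) := by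
    refine eq_of_infinite_eval_eq _ _ ((Set.finite_singleton 0).infinite_compl.mono ?_)
    intro t ht
    have ht : t ≠ 0 := ht
    have hM : ∀ i, t ^ (M - e i) = t ^ M * t⁻¹ ^ e i := fun i => by
      rw [pow_sub₀ t ht (Finset.le_sup (Finset.mem_univ i)), inv_pow]
    simp only [Set.mem_ofPred_eq, eval_finsetSum, eval_mul, eval_C, eval_pow, eval_X, hM]
    calc ∑ n ∈ Finset.range N, f n * t ^ (n + 1 + M)
        = t ^ M * ∑ n ∈ Finset.range N, t ^ (n + 1) * f n := by
          rw [Finset.mul_sum]; exact Finset.sum_congr rfl fun _ _ => by ring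
      _ = ∑ i, g i * (t ^ M * t⁻¹ ^ e i) := by
          rw [h t ht, Finset.mul_sum]; exact Finset.sum_congr rfl fun _ _ => by ring
  have := congrArg (coeff · (n + 1 + M)) hp
  simpa [finsetSum_coeff, coeff_C_mul_X_pow, hn, show ∀ i, n + 1 + M ≠ M - e i by omega]
    using this

theorem eq_zero_of_sum_pow_succ_smul_eq_of_mem_invPolynomialFunctions {K A : Type*} [Field K]
    [Infinite K] [Ring A] [Algebra K A] {F : K → A} (hF : F ∈ invPolynomialFunctions K A)
    {N : ℕ} {f : ℕ → A} (h : ∀ t : K, t ≠ 0 → ∑ n ∈ Finset.range N, t ^ (n + 1) • f n = F t)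
    {n : ℕ} (hn : n < N) : f n = 0 := by
  obtain ⟨ι, _, e, g, hF⟩ := hF
  refine (Module.forall_dual_apply_eq_zero_iff K (f n)).1 fun φ => ?_
  refine eq_zero_of_sum_pow_succ_mul_eq_sum_inv_pow_mul (f := fun n => φ (f n))
    (e := e) (g := fun i => φ (g i)) (fun t ht => ?_) hn
  simpa [hF] using congrArg φ (h t ht)

theorem sum_vandermonde_inv_smul_sum_pow_smul {K E : Type*} [Field K] [AddCommGroup E]
    [Module K E] {N : ℕ} {x : Fin N → K} (hx : Function.Injective x) (c : Fin N → E)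
    (n : Fin N) : ∑ k, (vandermonde x)⁻¹ n k • ∑ m : Fin N, x k ^ (m : ℕ) • c m = c n := by
  have hdet : IsUnit (vandermonde x).det := (det_vandermonde_ne_zero_iff.2 hx).isUnit
  calc ∑ k, (vandermonde x)⁻¹ n k • ∑ m : Fin N, x k ^ (m : ℕ) • c m
      = ∑ m, ((vandermonde x)⁻¹ * vandermonde x) n m • c m := by
        simp only [Finset.smul_sum, smul_smul, mul_apply, vandermonde_apply, Finset.sum_smul]
        exact Finset.sum_comm
    _ = c n := by simp [nonsing_inv_mul _ hdet, one_apply]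

theorem differentiableAt_coeff_of_eq_sum_inv_pow_smul {𝕜 F E : Type*}
    [NontriviallyNormedField 𝕜] [CharZero 𝕜] [NormedAddCommGroup F] [NormedSpace 𝕜 F]
    [NormedAddCommGroup E] [NormedSpace 𝕜 E] {D : Set F} {p : F} (hD : D ∈ 𝓝 p) {N : ℕ}
    {V : 𝕜 → F → E} {c : ℕ → F → E}
    (hV : ∀ t : 𝕜, t ≠ 0 → ∀ q ∈ D, V t q = ∑ m ∈ Finset.range N, t⁻¹ ^ m • c m q)
    (hdiff : ∀ t : 𝕜, t ≠ 0 → DifferentiableAt 𝕜 (V t) p) {n : ℕ} (hn : n < N) :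
    DifferentiableAt 𝕜 (c n) p := by
  set x : Fin N → 𝕜 := fun k => (k : ℕ) + 1
  have hx : Function.Injective x := fun a b hab => by
    simpa [x, Fin.val_inj] using hab
  have hx0 : ∀ k, (x k)⁻¹ ≠ 0 := fun k => inv_ne_zero (Nat.cast_add_one_ne_zero _)
  have hc : (fun q => ∑ k, (vandermonde x)⁻¹ ⟨n, hn⟩ k • V (x k)⁻¹ q) =ᶠ[𝓝 p] c n := by
    filter_upwards [hD] with q hq
    simp_rw [hV _ (hx0 _) q hq, inv_inv, ← Fin.sum_univ_eq_sum_range (fun m => x _ ^ m • c m q)]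
    exact sum_vandermonde_inv_smul_sum_pow_smul hx (fun m => c m q) ⟨n, hn⟩
  refine DifferentiableAt.congr_of_eventuallyEq ?_ hc.symm
  exact DifferentiableAt.fun_sum fun k _ => (hdiff _ (hx0 k)).const_smul _

theorem Matrix.inv_mul_eq_of_add_eq_mul {n R : Type*} [Fintype n] [DecidableEq n] [CommRing R]
    {P V dP dV X : Matrix n n R} (hP : IsUnit P) (hV : IsUnit V)
    (h : dP * V + P * dV = P * V * X) : P⁻¹ * dP = V * X * V⁻¹ - dV * V⁻¹ := by
  rw [isUnit_iff_isUnit_det] at hP hV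
  calc P⁻¹ * dP = P⁻¹ * (dP * V) * V⁻¹ := by rw [mul_assoc, mul_nonsing_inv_cancel_right _ _ hV]
    _ = P⁻¹ * (P * (V * X - dV)) * V⁻¹ := by rw [eq_sub_of_add_eq h, mul_sub P, mul_assoc P]
    _ = V * X * V⁻¹ - dV * V⁻¹ := by rw [nonsing_inv_mul_cancel_left _ _ hP, sub_mul]

section Pdy

variable {E : Type*} [NormedAddCommGroup E] [NormedSpace ℝ E]

theorem Filter.EventuallyEq.pdy_eq {f g : ℝ × ℝ → E} {p : ℝ × ℝ} (h : f =ᶠ[𝓝 p] g) :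
    pdy f p = pdy g p := by
  rw [pdy, pdy, h.fderiv_eq]

theorem pdy_eq_sum_smul_of_eqOn {D : Set (ℝ × ℝ)} {p : ℝ × ℝ} (hD : D ∈ 𝓝 p) {ι : Type*}
    {s : Finset ι} {a : ι → ℝ} {f : ℝ × ℝ → E} {g : ι → ℝ × ℝ → E}
    (hf : ∀ q ∈ D, f q = ∑ i ∈ s, a i • g i q) (hg : ∀ i ∈ s, DifferentiableAt ℝ (g i) p) :
    pdy f p = ∑ i ∈ s, a i • pdy (g i) p := by
  have hfg : f =ᶠ[𝓝 p] fun q => ∑ i ∈ s, a i • g i q := Filter.eventually_of_mem hD hf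
  have hsum := HasFDerivAt.fun_sum fun i hi => ((hg i hi).hasFDerivAt.fun_const_smul (a i))
  rw [hfg.pdy_eq, pdy, hsum.fderiv]
  simp [pdy]

variable {n : Type*} [Fintype n] [DecidableEq n]

theorem pdy_mul {f g : ℝ × ℝ → Matrix n n ℂ} {p : ℝ × ℝ} (hf : DifferentiableAt ℝ f p)
    (hg : DifferentiableAt ℝ g p) :
    pdy (fun q => f q * g q) p = pdy f p * g p + f p * pdy g p := by
  let mul : Matrix n n ℂ →L[ℝ] Matrix n n ℂ →L[ℝ] Matrix n n ℂ :=
    LinearMap.toContinuousLinearMap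
      (LinearMap.toContinuousLinearMap.toLinearMap ∘ₗ LinearMap.mul ℝ (Matrix n n ℂ))
  have h : fderiv ℝ (fun q => f q * g q) p =
      mul.precompR (ℝ × ℝ) (f p) (fderiv ℝ g p) + mul.precompL (ℝ × ℝ) (fderiv ℝ f p) (g p) :=
    mul.fderiv_of_bilinear hf hg
  exact (congrArg (· ((0 : ℝ), (1 : ℝ))) h).trans (add_comm _ _)

theorem inv_mul_pdy_eq_of_pdy_eq_mul {U P V : ℝ × ℝ → Matrix n n ℂ} {X : Matrix n n ℂ}
    {p : ℝ × ℝ} (hUPV : U =ᶠ[𝓝 p] fun q => P q * V q) (hP : DifferentiableAt ℝ P p)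
    (hV : DifferentiableAt ℝ V p) (hPu : IsUnit (P p)) (hVu : IsUnit (V p))
    (hU : pdy U p = U p * X) :
    (P p)⁻¹ * pdy P p = V p * X * (V p)⁻¹ - pdy V p * (V p)⁻¹ := by
  refine Matrix.inv_mul_eq_of_add_eq_mul hPu hVu ?_
  calc pdy P p * V p + P p * pdy V p = pdy (fun q => P q * V q) p := (pdy_mul hP hV).symm
    _ = pdy U p := hUPV.pdy_eq.symm
    _ = P p * V p * X := by rw [hU, hUPV.eq_of_nhds]

end Pdy

theorem plus_factor_independent_of_y_general (D : Set (ℝ × ℝ)) (hD : IsOpen D) (N : ℕ)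
    (U P V : ℝ → ℝ × ℝ → Matrix (Fin 2) (Fin 2) ℂ)
    (B₁ : ℝ × ℝ → Matrix (Fin 2) (Fin 2) ℂ)
    (Vc Wc Cc : ℕ → ℝ × ℝ → Matrix (Fin 2) (Fin 2) ℂ)
    (hPunit : ∀ l : ℝ, l ≠ 0 → ∀ p ∈ D, IsUnit (P l p))
    (hVunit : ∀ l : ℝ, l ≠ 0 → ∀ p ∈ D, IsUnit (V l p))
    (hsplit : ∀ l : ℝ, l ≠ 0 → ∀ p ∈ D, U l p = P l p * V l p)
    (hVexp : ∀ l : ℝ, l ≠ 0 → ∀ p ∈ D,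
      V l p = ∑ n ∈ Finset.range N, (l⁻¹ ^ n) • Vc n p)
    (hVinv : ∀ l : ℝ, l ≠ 0 → ∀ p ∈ D,
      (V l p)⁻¹ = ∑ n ∈ Finset.range N, (l⁻¹ ^ n) • Wc n p)
    (hVdiff : ∀ l : ℝ, l ≠ 0 → ∀ p ∈ D, DifferentiableAt ℝ (V l) p)
    (hPdiff : ∀ l : ℝ, l ≠ 0 → ∀ p ∈ D, DifferentiableAt ℝ (P l) p)
    (hMC : ∀ l : ℝ, l ≠ 0 → ∀ p ∈ D, pdy (U l) p = U l p * (l⁻¹ • B₁ p))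
    (hpos : ∀ l : ℝ, l ≠ 0 → ∀ p ∈ D,
      (P l p)⁻¹ * pdy (P l) p = ∑ n ∈ Finset.range N, (l ^ (n + 1)) • Cc n p) :
    ∀ l : ℝ, l ≠ 0 → ∀ p ∈ D, pdy (P l) p = 0 := by
  intro l hl p hp
  have hDp : D ∈ 𝓝 p := hD.mem_nhds hp
  have hVc : ∀ m ∈ Finset.range N, DifferentiableAt ℝ (Vc m) p := fun m hm =>
    differentiableAt_coeff_of_eq_sum_inv_pow_smul hDp hVexp (fun t ht => hVdiff t ht p hp)
      (Finset.mem_range.1 hm)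
  have hgauge : ∀ t : ℝ, t ≠ 0 → (P t p)⁻¹ * pdy (P t) p =
      V t p * (t⁻¹ • B₁ p) * (V t p)⁻¹ - pdy (V t) p * (V t p)⁻¹ := fun t ht =>
    inv_mul_pdy_eq_of_pdy_eq_mul (Filter.eventually_of_mem hDp (hsplit t ht)) (hPdiff t ht p hp)
      (hVdiff t ht p hp) (hPunit t ht p hp) (hVunit t ht p hp) (hMC t ht p hp)
  have hdV : ∀ t : ℝ, t ≠ 0 → pdy (V t) p = ∑ m ∈ Finset.range N, t⁻¹ ^ m • pdy (Vc m) p :=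
    fun t ht => pdy_eq_sum_smul_of_eqOn hDp (hVexp t ht) hVc
  let L := invPolynomialFunctions ℝ (Matrix (Fin 2) (Fin 2) ℂ)
  have hL : ∀ c : ℕ → Matrix (Fin 2) (Fin 2) ℂ,
      (fun t : ℝ => ∑ m ∈ Finset.range N, t⁻¹ ^ m • c m) ∈ L :=
    sum_inv_pow_smul_mem_invPolynomialFunctions _
  have hnonpos := L.sub_mem
    (L.mul_mem (L.mul_mem (hL (Vc · p)) (inv_pow_smul_mem_invPolynomialFunctions 1 (B₁ p)))
      (hL (Wc · p)))
    (L.mul_mem (hL fun m => pdy (Vc m) p) (hL (Wc · p)))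
  have hCc : ∀ n ∈ Finset.range N, Cc n p = 0 := fun n hn =>
    eq_zero_of_sum_pow_succ_smul_eq_of_mem_invPolynomialFunctions hnonpos (fun t ht => by
      rw [← hpos t ht p hp, hgauge t ht, hdV t ht, hVinv t ht p hp, hVexp t ht p hp]
      simp only [Pi.sub_apply, Pi.mul_apply, pow_one]) (Finset.mem_range.1 hn)
  have hPinv : (P l p)⁻¹ * pdy (P l) p = 0 := by
    rw [hpos l hl p hp, Finset.sum_eq_zero fun n hn => by rw [hCc n hn, smul_zero]]
  have hPdet := (isUnit_iff_isUnit_det _).1 (hPunit l hl p hp)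
  rw [← mul_nonsing_inv_cancel_left _ (pdy (P l) p) hPdet, hPinv, mul_zero]

/-- Proposition 1 ('onlyXonlyY') in algebraic form: in the Birkhoff splitting U = P·V,
where P expands in non-negative powers of λ, V and V⁻¹ expand in non-positive powers of λ,
U⁻¹∂U/∂y = λ⁻¹B₁, and P⁻¹∂P/∂y contains only strictly positive powers of λ,
the factor P is independent of y: ∂P/∂y = 0. -/
theorem plus_factor_independent_of_y (D : Set (ℝ × ℝ)) (hD : IsOpen D) (N : ℕ)
    (U P V : ℝ → ℝ × ℝ → Matrix (Fin 2) (Fin 2) ℂ)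
    (B₁ : ℝ × ℝ → Matrix (Fin 2) (Fin 2) ℂ)
    (Pc Vc Wc Cc : ℕ → ℝ × ℝ → Matrix (Fin 2) (Fin 2) ℂ)
    (hPunit : ∀ l : ℝ, l ≠ 0 → ∀ p ∈ D, IsUnit (P l p))
    (hVunit : ∀ l : ℝ, l ≠ 0 → ∀ p ∈ D, IsUnit (V l p))
    (hsplit : ∀ l : ℝ, l ≠ 0 → ∀ p ∈ D, U l p = P l p * V l p)
    (hPexp : ∀ l : ℝ, l ≠ 0 → ∀ p ∈ D,
      P l p = ∑ n ∈ Finset.range N, (l ^ n) • Pc n p)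
    (hVexp : ∀ l : ℝ, l ≠ 0 → ∀ p ∈ D,
      V l p = ∑ n ∈ Finset.range N, (l⁻¹ ^ n) • Vc n p)
    (hVinv : ∀ l : ℝ, l ≠ 0 → ∀ p ∈ D,
      (V l p)⁻¹ = ∑ n ∈ Finset.range N, (l⁻¹ ^ n) • Wc n p)
    (hVdiff : ∀ l : ℝ, l ≠ 0 → ∀ p ∈ D, DifferentiableAt ℝ (V l) p)
    (hPdiff : ∀ l : ℝ, l ≠ 0 → ∀ p ∈ D, DifferentiableAt ℝ (P l) p)
    (hMC : ∀ l : ℝ, l ≠ 0 → ∀ p ∈ D, pdy (U l) p = U l p * (l⁻¹ • B₁ p))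
    (hpos : ∀ l : ℝ, l ≠ 0 → ∀ p ∈ D,
      (P l p)⁻¹ * pdy (P l) p = ∑ n ∈ Finset.range N, (l ^ (n + 1)) • Cc n p) :
    ∀ l : ℝ, l ≠ 0 → ∀ p ∈ D, pdy (P l) p = 0 :=
  plus_factor_independent_of_y_general D hD N U P V B₁ Vc Wc Cc hPunit hVunit hsplit hVexp hVinv
    hVdiff hPdiff hMC hpos
end
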